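/- In the theory of the random graph, for distinct a, b, c with R(b,c) and R(c,a): letting q = tp(bc, c), r = tp(c, a), the special partial type Γ_a(y₀y₁) ≡ ∃z (q(y₀y₁,z) ∧ r(z,a) ∧ y₀y₁ ⫝_z a) is equivalent to (y₀ ≠ y₁) ∧ (y₀ ≠ a) ∧ (y₁ ≠ a) ∧ R(y₀,y₁) ∧ R(y₁,a); in particular Γ_a is a special partial type which is not a complete type over a. -/
import Mathlib


/-- An abstract monster model of a simple first-order theory.  It carries
nonforking independence `indep A C B` (meaning `A ⫝_C B`), equality of types
(`tpEq`) and of Lascar strong types (`lstpEq`) of finite tuples (coded as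
lists) over parameter sets, a predicate `typeDefOver S A` expressing that the
set `S` of tuples is type-definable over `A`, and the closure operators
`acl`, `dcl` and `bdd`.  Simplicity of the theory is witnessed by symmetry of
nonforking and by the independence theorem over Lascar strong types. -/
class SimpleMonster (M : Type*) where
  indep : Set M → Set M → Set M → Prop
  tpEq : List M → List M → Set M → Prop
  lstpEq : List M → List M → Set M → Prop
  typeDefOver : Set (List M) → Set M → Prop
  acl : Set M → Set M
  dcl : Set M → Set M
  bdd : Set M → Set M
  indep_symm : ∀ A C B : Set M, indep A C B → indep B C A
  indep_mono : ∀ A C B B' : Set M, B' ⊆ B → indep A C B → indep A C B'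
  lstp_tp : ∀ (s t : List M) (A : Set M), lstpEq s t A → tpEq s t A
  /-- the independence theorem over Lascar strong types -/
  ind_thm : ∀ (c c' : List M) (A B B' : Set M),
    lstpEq c c' A → indep B A B' →
    indep {x | x ∈ c} A B → indep {x | x ∈ c'} A B' →
    ∃ c'' : List M, tpEq c'' c (A ∪ B) ∧ tpEq c'' c' (A ∪ B') ∧
      indep {x | x ∈ c''} A (B ∪ B')

namespace SimpleMonster

variable {M : Type*} [SimpleMonster M]

/-- `Q` is (the set of realizations of) a complete `n`-type over `∅`. -/
def IsCompleteType (n : ℕ) (Q : Set (List M)) : Prop :=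
  (∃ t, t ∈ Q) ∧ ∀ t ∈ Q, t.length = n ∧ ∀ t', (t' ∈ Q ↔ tpEq t' t (∅ : Set M))

/-- The partial type `Γ_a(y) ≡ ∃ z (q(y,z) ∧ r(z,a) ∧ y ⫝_z a)` obtained by
generic composition of the complete types `q = Q` and `r = R`. -/
def Gamma (Q R : Set (List M)) (a : M) : Set M :=
  {y | ∃ z : M, [y, z] ∈ Q ∧ [z, a] ∈ R ∧ indep {y} {z} {a}}

/-- `R̄_Γ(c,a,a')` : `c ⊨ Γ_a ∧ Γ_{a'}`, `c ⫝_a a'` and `c ⫝_{a'} a`. -/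
def Rbar (Q R : Set (List M)) (c a a' : M) : Prop :=
  c ∈ Gamma Q R a ∧ c ∈ Gamma Q R a' ∧ indep {c} {a} {a'} ∧ indep {c} {a'} {a}

/-- `R_Γ(x,x') ≡ ∃ y R̄_Γ(y,x,x')`. -/
def RGamma (Q R : Set (List M)) (x x' : M) : Prop := ∃ y : M, Rbar Q R y x x'

/-- `E_Γ`, the transitive closure of `R_Γ`. -/
def EGamma (Q R : Set (List M)) : M → M → Prop := Relation.TransGen (RGamma Q R)

/-- `p(x) = ∃ z r(z,x)`. -/
def pSet (R : Set (List M)) : Set M := {x | ∃ z : M, [z, x] ∈ R}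

/-- `tp(d/A)`, as its set of realizations. -/
def tpSet (d : M) (A : Set M) : Set M := {y | tpEq [y] [d] A}

/-- The partial type `p` (in tuple variables) over `A` is an amalgamation
base: the independence theorem holds for it. -/
def IsAmalgBase (p : Set (List M)) (A : Set M) : Prop :=
  ∀ (c c' : List M) (B B' : Set M), c ∈ p → c' ∈ p → lstpEq c c' A →
    indep B A B' → indep {x | x ∈ c} A B → indep {x | x ∈ c'} A B' →
    ∃ c'' ∈ p, tpEq c'' c (A ∪ B) ∧ tpEq c'' c' (A ∪ B') ∧
      indep {x | x ∈ c''} A (B ∪ B')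

/-- a set of singletons, as a set of 1-tuples -/
def embed1 (S : Set M) : Set (List M) := {l | ∃ y ∈ S, l = [y]}

/-- a binary relation, as a set of 2-tuples -/
def embed2 (R : M → M → Prop) : Set (List M) := {l | ∃ x x' : M, R x x' ∧ l = [x, x']}

/-- a ternary relation, as a set of 3-tuples -/
def embed3 (R : M → M → M → Prop) : Set (List M) :=
  {l | ∃ x y z : M, R x y z ∧ l = [x, y, z]}

end SimpleMonster

open SimpleMonster

/-- in the theory of the random graph, for distinct `a, b, c`
with `R(b,c)` and `R(c,a)`, letting `q = tp(bc, c)` and `r = tp(c, a)`, the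
special partial type `Γ_a(y₀y₁) ≡ ∃z (q(y₀y₁,z) ∧ r(z,a) ∧ y₀y₁ ⫝_z a)` is
equivalent to `(y₀ ≠ y₁) ∧ (y₀ ≠ a) ∧ (y₁ ≠ a) ∧ R(y₀,y₁) ∧ R(y₁,a)`; in
particular `Γ_a` is not a complete type over `a`.  The known description of
types and of forking independence in the random graph is assumed. -/
theorem random_graph_special_not_complete {M : Type*} [SimpleMonster M]
    (Rel : M → M → Prop)
    (hsym : ∀ x y : M, Rel x y → Rel y x) (hirr : ∀ x : M, ¬ Rel x x)
    (hext : ∀ s t : Finset M, (∀ x ∈ s, x ∉ t) →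
      ∃ z : M, z ∉ s ∧ z ∉ t ∧ (∀ x ∈ s, Rel z x) ∧ ∀ x ∈ t, ¬ Rel z x)
    (hindep : ∀ A C B : Set M, indep A C B ↔ A ∩ B ⊆ C)
    (htp3 : ∀ x y z x' y' z' : M, tpEq [x, y, z] [x', y', z'] (∅ : Set M) ↔
      ((x = y ↔ x' = y') ∧ (x = z ↔ x' = z') ∧ (y = z ↔ y' = z') ∧
       (Rel x y ↔ Rel x' y') ∧ (Rel x z ↔ Rel x' z') ∧ (Rel y z ↔ Rel y' z')))
    (htp2 : ∀ x y x' y' : M, tpEq [x, y] [x', y'] (∅ : Set M) ↔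
      ((x = y ↔ x' = y') ∧ (Rel x y ↔ Rel x' y')))
    (a : M)
    (htp2a : ∀ x y x' y' : M, tpEq [x, y] [x', y'] ({a} : Set M) ↔
      ((x = y ↔ x' = y') ∧ (x = a ↔ x' = a) ∧ (y = a ↔ y' = a) ∧
       (Rel x y ↔ Rel x' y') ∧ (Rel x a ↔ Rel x' a) ∧ (Rel y a ↔ Rel y' a)))
    (b c : M) (hab : a ≠ b) (hac : a ≠ c) (hbc : b ≠ c)
    (hRbc : Rel b c) (hRca : Rel c a) :
    {p : M × M | ∃ z : M, tpEq [p.1, p.2, z] [b, c, c] (∅ : Set M) ∧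
        tpEq [z, a] [c, a] (∅ : Set M) ∧ indep {p.1, p.2} {z} ({a} : Set M)}
      = {p : M × M | p.1 ≠ p.2 ∧ p.1 ≠ a ∧ p.2 ≠ a ∧ Rel p.1 p.2 ∧ Rel p.2 a} ∧
    ¬ ∀ p ∈ {p : M × M | ∃ z : M, tpEq [p.1, p.2, z] [b, c, c] (∅ : Set M) ∧
          tpEq [z, a] [c, a] (∅ : Set M) ∧ indep {p.1, p.2} {z} ({a} : Set M)},
        ∀ p' ∈ {p : M × M | ∃ z : M, tpEq [p.1, p.2, z] [b, c, c] (∅ : Set M) ∧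
          tpEq [z, a] [c, a] (∅ : Set M) ∧ indep {p.1, p.2} {z} ({a} : Set M)},
        tpEq [p.1, p.2] [p'.1, p'.2] ({a} : Set M) := by

  classical
  have hset : {p : M × M | ∃ z : M, tpEq [p.1, p.2, z] [b, c, c] (∅ : Set M) ∧
        tpEq [z, a] [c, a] (∅ : Set M) ∧ indep {p.1, p.2} {z} ({a} : Set M)}
      = {p : M × M | p.1 ≠ p.2 ∧ p.1 ≠ a ∧ p.2 ≠ a ∧ Rel p.1 p.2 ∧ Rel p.2 a} := by
    ext ⟨y0, y1⟩
    simp only [Set.mem_setOf_eq]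
    constructor
    · rintro ⟨z, h3, h2, hi⟩
      rw [htp3] at h3
      rw [htp2] at h2
      obtain ⟨e1, e2, e3, r1, r2, r3⟩ := h3
      obtain ⟨e4, r4⟩ := h2
      have hzy1 : y1 = z := e3.mpr rfl
      have hy01 : y0 ≠ y1 := fun h => hbc (e1.mp h)
      have hy1a : y1 ≠ a := by
        rw [hzy1]; exact fun h => hac (e4.mp h).symm
      have hRy01 : Rel y0 y1 := r1.mpr hRbc
      have hRy1a : Rel y1 a := by rw [hzy1]; exact r4.mpr hRca
      have hy0a : y0 ≠ a := by
        intro h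
        have := (hindep {y0, y1} {z} {a}).mp hi
        have : a ∈ ({z} : Set M) := this ⟨by left; exact h.symm, rfl⟩
        exact hy1a (hzy1 ▸ this.symm) |>.elim
      exact ⟨hy01, hy0a, hy1a, hRy01, hRy1a⟩
    · rintro ⟨hy01, hy0a, hy1a, hR01, hR1a⟩
      refine ⟨y1, ?_, ?_, ?_⟩
      · rw [htp3]
        refine ⟨⟨fun h => (hy01 h).elim, fun h => (hbc h).elim⟩,
          ⟨fun h => (hy01 h).elim, fun h => (hbc h).elim⟩,
          ⟨fun _ => rfl, fun _ => rfl⟩,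
          ⟨fun _ => hRbc, fun _ => hR01⟩,
          ⟨fun _ => hRbc, fun _ => hR01⟩,
          ⟨fun h => (hirr y1 h).elim, fun h => (hirr c h).elim⟩⟩
      · rw [htp2]
        exact ⟨⟨fun h => (hy1a h).elim, fun h => (hac h.symm).elim⟩,
          ⟨fun _ => hRca, fun _ => hR1a⟩⟩
      · rw [hindep]
        rintro x ⟨hx1, hx2⟩
        simp only [Set.mem_insert_iff, Set.mem_singleton_iff] at hx1 hx2
        rcases hx1 with h | h
        · exact absurd (h.symm.trans hx2) hy0a
        · exact absurd (h.symm.trans hx2) hy1a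
  refine ⟨hset, ?_⟩
  intro hcomp
  -- build two pairs with different types over a
  obtain ⟨u, hu1, _, hu3, _⟩ := hext {a} ∅ (by simp)
  have hua : u ≠ a := by simpa using hu1
  have hRua : Rel u a := hu3 a (by simp)
  obtain ⟨v, hv1, hv2, hv3, hv4⟩ := hext {u} {a} (by simp [hua])
  have hvu : v ≠ u := by simpa using hv1
  have hva : v ≠ a := by simpa using hv2
  have hRvu : Rel v u := hv3 u (by simp)
  have hnRva : ¬ Rel v a := hv4 a (by simp)
  obtain ⟨w, hw1, _, hw3, _⟩ := hext {u, a} ∅ (by simp)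
  have hwu : w ≠ u := by simp at hw1; exact hw1.1
  have hwa : w ≠ a := by simp at hw1; exact hw1.2
  have hRwu : Rel w u := hw3 u (by simp)
  have hRwa : Rel w a := hw3 a (by simp)
  have hmem1 : ((v, u) : M × M) ∈ {p : M × M | ∃ z : M,
      tpEq [p.1, p.2, z] [b, c, c] (∅ : Set M) ∧
      tpEq [z, a] [c, a] (∅ : Set M) ∧ indep {p.1, p.2} {z} ({a} : Set M)} := by
    rw [hset]; exact ⟨hvu, hva, hua, hRvu, hRua⟩
  have hmem2 : ((w, u) : M × M) ∈ {p : M × M | ∃ z : M,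
      tpEq [p.1, p.2, z] [b, c, c] (∅ : Set M) ∧
      tpEq [z, a] [c, a] (∅ : Set M) ∧ indep {p.1, p.2} {z} ({a} : Set M)} := by
    rw [hset]; exact ⟨hwu, hwa, hua, hRwu, hRua⟩
  have := hcomp _ hmem1 _ hmem2
  rw [htp2a] at this
  exact hnRva (this.2.2.2.2.1.mpr hRwa)
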